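/- arXiv:1503.00399 — 9 statements merged into one kernel-verified Lean document; each statement's English description precedes it below -/
import Mathlib

section
/- Let N ≥ 2 be an integer, let j be a positive integer with j < N, and let X, Y > 0 be reals satisfying X² ≤ N·Y and j < X²/Y. Define d = (j·X + √(j·(N−j)·(N·Y − X²)))/(j·N) and w = (X − j·d)/(N−j). Then d > 0, w > 0, j·d + (N−j)·w = X, and j·d² + (N−j)·w² = Y; that is, the semi-equal-dosage schedule with the first j fractions equal to d and the remaining N−j fractions equal to w is a nonnegative schedule realizing the pair (X, Y). -/
/-- For an integer `N ≥ 2`, a positive integer `j < N`, and reals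
`X, Y > 0` with `X² ≤ N·Y` and `j < X²/Y`, the semi-equal-dosage doses
`d = (j·X + √(j·(N−j)·(N·Y − X²)))/(j·N)` and `w = (X − j·d)/(N−j)` satisfy
`d > 0`, `w > 0`, `j·d + (N−j)·w = X` and `j·d² + (N−j)·w² = Y`. -/
theorem semi_equal_dosage_realizes
    (N j : ℕ) (hN : 2 ≤ N) (hj : 0 < j) (hjN : j < N)
    (X Y : ℝ) (hX : 0 < X) (hY : 0 < Y)
    (hXY : X ^ 2 ≤ (N : ℝ) * Y) (hjXY : (j : ℝ) < X ^ 2 / Y)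
    (d w : ℝ)
    (hd : d = ((j : ℝ) * X +
      Real.sqrt ((j : ℝ) * ((N : ℝ) - (j : ℝ)) * ((N : ℝ) * Y - X ^ 2))) / ((j : ℝ) * N))
    (hw : w = (X - (j : ℝ) * d) / ((N : ℝ) - (j : ℝ))) :
    0 < d ∧ 0 < w ∧
    (j : ℝ) * d + ((N : ℝ) - (j : ℝ)) * w = X ∧
    (j : ℝ) * d ^ 2 + ((N : ℝ) - (j : ℝ)) * w ^ 2 = Y := by
  have hj' : (0 : ℝ) < (j : ℝ) := by exact_mod_cast hj
  have hN' : (0 : ℝ) < (N : ℝ) := by positivity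
  have hNj : (0 : ℝ) < (N : ℝ) - (j : ℝ) := by
    have : (j : ℝ) < (N : ℝ) := by exact_mod_cast hjN
    linarith
  set s := Real.sqrt ((j : ℝ) * ((N : ℝ) - (j : ℝ)) * ((N : ℝ) * Y - X ^ 2)) with hs
  have harg : 0 ≤ (j : ℝ) * ((N : ℝ) - (j : ℝ)) * ((N : ℝ) * Y - X ^ 2) := by
    have : 0 ≤ (N : ℝ) * Y - X ^ 2 := by linarith
    positivity
  have hs0 : 0 ≤ s := Real.sqrt_nonneg _
  have hs2 : s ^ 2 = (j : ℝ) * ((N : ℝ) - (j : ℝ)) * ((N : ℝ) * Y - X ^ 2) := by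
    rw [hs, sq, Real.mul_self_sqrt harg]
  have hjY : (j : ℝ) * Y < X ^ 2 := by
    have h := (lt_div_iff₀ hY).mp hjXY
    linarith
  have hslt : s < ((N : ℝ) - (j : ℝ)) * X := by
    nlinarith [hs2, hjY, mul_pos hNj hN', mul_pos hNj hX, hs0,
      mul_pos (mul_pos hNj hN') (sub_pos.mpr hjY)]
  have hd0 : 0 < d := by
    rw [hd]
    apply div_pos
    · nlinarith [mul_pos hj' hX]
    · positivity
  have hjd : (j : ℝ) * d = ((j : ℝ) * X + s) / N := by
    rw [hd]; field_simp
  have hw0 : 0 < w := by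
    rw [hw]
    apply div_pos _ hNj
    rw [hjd]
    rw [sub_pos, div_lt_iff₀ hN']
    nlinarith
  refine ⟨hd0, hw0, ?_, ?_⟩
  · rw [hw]; field_simp; ring
  · have hwval : w = (((N : ℝ) - (j : ℝ)) * X - s) / ((N : ℝ) * ((N : ℝ) - (j : ℝ))) := by
      rw [hw, hjd]; field_simp; ring
    rw [hd, hwval]
    field_simp
    linear_combination (N : ℝ) * hs2
end

section
/- Let N ≥ 2 be an integer, j an integer with 1 ≤ j < N, and X, Y > 0 reals with X² ≤ N·Y. Define d = (j·X + √(j·(N−j)·(N·Y − X²)))/(j·N). Then X − j·d > 0 if and only if X²/Y > j. Consequently the remaining dose w = (X − j·d)/(N−j) is strictly positive if and only if j < X²/Y. -/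
/-- For an integer `N ≥ 2`, an integer `1 ≤ j < N`, and reals `X, Y > 0`
with `X² ≤ N·Y`, the dose `d = (j·X + √(j·(N−j)·(N·Y − X²)))/(j·N)` satisfies
`X − j·d > 0 ↔ X²/Y > j`; consequently `w = (X − j·d)/(N−j)` is strictly positive
if and only if `j < X²/Y`. -/
theorem semi_equal_dosage_remaining_pos_iff
    (N j : ℕ) (hN : 2 ≤ N) (hj1 : 1 ≤ j) (hjN : j < N)
    (X Y : ℝ) (hX : 0 < X) (hY : 0 < Y) (hXY : X ^ 2 ≤ (N : ℝ) * Y)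
    (d w : ℝ)
    (hd : d = ((j : ℝ) * X +
      Real.sqrt ((j : ℝ) * ((N : ℝ) - (j : ℝ)) * ((N : ℝ) * Y - X ^ 2))) / ((j : ℝ) * N))
    (hw : w = (X - (j : ℝ) * d) / ((N : ℝ) - (j : ℝ))) :
    (0 < X - (j : ℝ) * d ↔ (j : ℝ) < X ^ 2 / Y) ∧
    (0 < w ↔ (j : ℝ) < X ^ 2 / Y) := by
  have hj0 : (0:ℝ) < (j:ℝ) := by exact_mod_cast hj1
  have hN0 : (0:ℝ) < (N:ℝ) := by positivity
  have hNj : (j:ℝ) < (N:ℝ) := by exact_mod_cast hjN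
  have hNj0 : (0:ℝ) < (N:ℝ) - (j:ℝ) := by linarith
  set s := Real.sqrt ((j : ℝ) * ((N : ℝ) - (j : ℝ)) * ((N : ℝ) * Y - X ^ 2)) with hs
  have hsnn : 0 ≤ s := Real.sqrt_nonneg _
  have hkey : X - (j:ℝ) * d = (((N:ℝ) - (j:ℝ)) * X - s) / N := by
    rw [hd]; field_simp; ring
  have hmain : 0 < X - (j:ℝ) * d ↔ (j:ℝ) < X ^ 2 / Y := by
    rw [hkey, div_pos_iff]
    constructor
    · rintro (⟨h1, -⟩ | ⟨-, h2⟩)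
      · have hlt : s < ((N:ℝ) - (j:ℝ)) * X := by linarith
        have hsq : (j : ℝ) * ((N : ℝ) - (j : ℝ)) * ((N : ℝ) * Y - X ^ 2)
            < (((N:ℝ) - (j:ℝ)) * X) ^ 2 :=
          (Real.sqrt_lt' (by positivity)).mp hlt
        rw [lt_div_iff₀ hY]
        by_contra h'
        push_neg at h'
        nlinarith [mul_nonneg (mul_pos hNj0 hN0).le (by linarith : (0:ℝ) ≤ (j:ℝ)*Y - X^2)]
      · linarith
    · intro h
      left
      have hjY : (j:ℝ) * Y < X ^ 2 := (lt_div_iff₀ hY).mp h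
      have hsq : (j : ℝ) * ((N : ℝ) - (j : ℝ)) * ((N : ℝ) * Y - X ^ 2)
          < (((N:ℝ) - (j:ℝ)) * X) ^ 2 := by
        nlinarith [mul_pos (mul_pos hNj0 hN0) (by linarith : (0:ℝ) < X^2 - (j:ℝ)*Y)]
      have := (Real.sqrt_lt' (by positivity : (0:ℝ) < ((N:ℝ) - (j:ℝ)) * X)).mpr hsq
      exact ⟨by linarith [this], hN0⟩
  refine ⟨hmain, ?_⟩
  rw [hw, div_pos_iff]
  constructor
  · rintro (⟨h1, -⟩ | ⟨-, h2⟩)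
    · exact hmain.mp h1
    · linarith
  · intro h; exact Or.inl ⟨hmain.mpr h, hNj0⟩
end

section
/- Let N be a positive integer and X, Y ≥ 0 real numbers. There exist nonnegative reals d_1, …, d_N with ∑_{j=1}^N d_j = X and ∑_{j=1}^N d_j² = Y if and only if X² ≤ N·Y and Y ≤ X². -/
/-- For a positive integer `N` and reals `X, Y ≥ 0`, there exist
nonnegative reals `d_1, …, d_N` with `∑ d_j = X` and `∑ d_j² = Y` if and only if
`X² ≤ N·Y` and `Y ≤ X²`. -/
theorem schedule_exists_iff
    (N : ℕ) (hN : 0 < N) (X Y : ℝ) (hX : 0 ≤ X) (hY : 0 ≤ Y) :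
    (∃ d : Fin N → ℝ, (∀ j, 0 ≤ d j) ∧
      (∑ j, d j) = X ∧ (∑ j, (d j) ^ 2) = Y) ↔
    X ^ 2 ≤ (N : ℝ) * Y ∧ Y ≤ X ^ 2 := by
  obtain ⟨m, rfl⟩ := Nat.exists_eq_succ_of_ne_zero hN.ne'
  constructor
  · rintro ⟨d, hd, rfl, rfl⟩
    refine ⟨?_, ?_⟩
    · have := sq_sum_le_card_mul_sum_sq (s := Finset.univ) (f := d)
      simpa using this
    · exact Finset.sum_sq_le_sq_sum_of_nonneg (fun i _ => hd i)
  · rintro ⟨h1, h2⟩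
    set M : ℝ := (m : ℝ) with hM
    have hM0 : 0 ≤ M := Nat.cast_nonneg m
    have hdisc : 0 ≤ M * ((M + 1) * Y - X ^ 2) := by
      apply mul_nonneg hM0
      push_cast at h1
      linarith
    set s : ℝ := Real.sqrt (M * ((M + 1) * Y - X ^ 2)) with hs
    have hs0 : 0 ≤ s := Real.sqrt_nonneg _
    have hssq : s ^ 2 = M * ((M + 1) * Y - X ^ 2) := Real.sq_sqrt hdisc
    have hsle : s ≤ M * X := by
      rw [hs]
      have hle : M * ((M + 1) * Y - X ^ 2) ≤ (M * X) ^ 2 := by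
        have h3 : M * (M + 1) * Y ≤ M * (M + 1) * X ^ 2 :=
          mul_le_mul_of_nonneg_left h2 (by positivity)
        nlinarith [h3]
      calc Real.sqrt (M * ((M + 1) * Y - X ^ 2)) ≤ Real.sqrt ((M * X) ^ 2) :=
            Real.sqrt_le_sqrt hle
        _ = M * X := Real.sqrt_sq (by positivity)
    set a : ℝ := (X + s) / (M + 1) with ha
    set b : ℝ := (M * X - s) / (M * (M + 1)) with hb
    by_cases hm : m = 0
    · subst hm
      push_cast at h1
      refine ⟨fun _ => X, fun _ => hX, by simp, by simp; linarith⟩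
    · have hMpos : 0 < M := by
        simp only [hM]
        exact_mod_cast Nat.pos_of_ne_zero hm
      have hM1 : 0 < M + 1 := by linarith
      refine ⟨Fin.cons a (fun _ => b), ?_, ?_, ?_⟩
      · intro j
        refine Fin.cases ?_ ?_ j
        · exact div_nonneg (by linarith) hM1.le
        · intro i
          exact div_nonneg (by linarith) (by positivity)
      · rw [Fin.sum_univ_succ]
        simp only [Fin.cons_zero, Fin.cons_succ, Finset.sum_const, Finset.card_univ,
          Fintype.card_fin, nsmul_eq_mul]
        rw [ha, hb, ← hM]
        field_simp
        ring
      · rw [Fin.sum_univ_succ]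
        simp only [Fin.cons_zero, Fin.cons_succ, Finset.sum_const, Finset.card_univ,
          Fintype.card_fin, nsmul_eq_mul]
        rw [ha, hb, ← hM]
        have hMne : M ≠ 0 := hMpos.ne'
        have hM1ne : (M + 1) ≠ 0 := hM1.ne'
        field_simp
        linear_combination (M + 1) * hssq
end

section
/- Let f : ℝ² → ℝ be a nonnegative Lebesgue-integrable function and fix X, Y > 0. Then the function z ↦ G(X, Y, z) is continuous on ℝ. Consequently, if G(X, Y, z*) < c for some constant c, then there exists z > z* with G(X, Y, z) ≤ c, so at an optimal solution of the probabilistic formulation the tumor-BED chance constraint G(X, Y, z) ≤ c must be active. -/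
open MeasureTheory

/-- The chance-constraint integral `G(X, Y, z) = ∫_{A(X,Y,z)} f dλ` where
`A(X,Y,z) = {(α, β) : α ≥ 0, β ≥ 0, α·X + β·Y ≤ z}` and `λ` is Lebesgue measure
on `ℝ²`. -/
noncomputable def chanceIntegral (f : ℝ × ℝ → ℝ) (X Y z : ℝ) : ℝ :=
  ∫ p in {p : ℝ × ℝ | 0 ≤ p.1 ∧ 0 ≤ p.2 ∧ p.1 * X + p.2 * Y ≤ z}, f p

/-- For a nonnegative Lebesgue-integrable `f : ℝ² → ℝ` and fixed
`X, Y > 0`, the function `z ↦ G(X, Y, z)` is continuous; consequently, if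
`G(X, Y, z*) < c` then there is `z > z*` with `G(X, Y, z) ≤ c`, so at an optimum
the tumor-BED chance constraint `G(X, Y, z) ≤ c` must be active. -/
theorem chanceIntegral_continuous_and_active
    (f : ℝ × ℝ → ℝ) (hf_int : Integrable f (volume : Measure (ℝ × ℝ)))
    (hf_nonneg : ∀ p, 0 ≤ f p) (X Y : ℝ) (hX : 0 < X) (hY : 0 < Y) :
    Continuous (fun z => chanceIntegral f X Y z) ∧
    ∀ c zstar : ℝ, chanceIntegral f X Y zstar < c →
      ∃ z, zstar < z ∧ chanceIntegral f X Y z ≤ c := by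
  set A : ℝ → Set (ℝ × ℝ) :=
    fun z => {p : ℝ × ℝ | 0 ≤ p.1 ∧ 0 ≤ p.2 ∧ p.1 * X + p.2 * Y ≤ z} with hAdef
  have hA : ∀ z, MeasurableSet (A z) := fun z => by
    have hrw : A z = {p : ℝ × ℝ | 0 ≤ p.1} ∩
        ({p : ℝ × ℝ | 0 ≤ p.2} ∩ {p : ℝ × ℝ | p.1 * X + p.2 * Y ≤ z}) := rfl
    rw [hrw]
    exact (measurableSet_le measurable_const measurable_fst).inter
      ((measurableSet_le measurable_const measurable_snd).inter
        (measurableSet_le ((measurable_fst.mul_const X).add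
          (measurable_snd.mul_const Y)) measurable_const))
  have hG : ∀ z, chanceIntegral f X Y z = ∫ p, (A z).indicator f p := fun z => by
    rw [integral_indicator (hA z)]; rfl
  have hcont : Continuous (fun z => chanceIntegral f X Y z) := by
    rw [continuous_iff_continuousAt]
    intro z₀
    have hline : volume {p : ℝ × ℝ | p.1 * X + p.2 * Y = z₀} = 0 := by
      have hmeas : MeasurableSet {p : ℝ × ℝ | p.1 * X + p.2 * Y = z₀} :=
        measurableSet_eq_fun (by fun_prop) measurable_const
      rw [MeasureTheory.Measure.volume_eq_prod, MeasureTheory.Measure.measure_prod_null hmeas]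
      filter_upwards with x
      have : Prod.mk x ⁻¹' {p : ℝ × ℝ | p.1 * X + p.2 * Y = z₀}
          = {(z₀ - x * X) / Y} := by
        ext y
        simp only [Set.mem_preimage, Set.mem_setOf_eq, Set.mem_singleton_iff,
          eq_div_iff hY.ne']
        constructor <;> intro h <;> linarith
      rw [this]
      simp
    have h0 : ∀ᵐ p : ℝ × ℝ, ¬ (p.1 * X + p.2 * Y = z₀) := by
      rw [ae_iff]; simpa using hline
    have key : Filter.Tendsto (fun z => chanceIntegral f X Y z) (nhds z₀)
        (nhds (chanceIntegral f X Y z₀)) := by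
      simp only [hG]
      apply MeasureTheory.tendsto_integral_filter_of_dominated_convergence
        (fun p => |f p|)
      · filter_upwards with z
        exact hf_int.aestronglyMeasurable.indicator (hA z)
      · filter_upwards with z
        filter_upwards with p
        simpa using norm_indicator_le_norm_self f p
      · exact hf_int.abs
      · filter_upwards [h0] with p hp
        rcases lt_or_gt_of_ne hp with hlt | hgt
        · have hev : ∀ᶠ w in nhds z₀, (A w).indicator f p = (A z₀).indicator f p := by
            filter_upwards [eventually_gt_nhds hlt] with w hw
            simp [hAdef, Set.indicator_apply, Set.mem_setOf_eq, hw.le, hlt.le]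
          exact Filter.Tendsto.congr' (Filter.EventuallyEq.symm hev) tendsto_const_nhds
        · have hev : ∀ᶠ w in nhds z₀, (A w).indicator f p = (A z₀).indicator f p := by
            filter_upwards [eventually_lt_nhds hgt] with w hw
            simp [hAdef, Set.indicator_apply, Set.mem_setOf_eq, not_le.mpr hw,
              not_le.mpr hgt]
          exact Filter.Tendsto.congr' (Filter.EventuallyEq.symm hev) tendsto_const_nhds
    exact key
  refine ⟨hcont, fun c zstar hlt => ?_⟩
  have hev : ∀ᶠ w in nhds zstar, chanceIntegral f X Y w < c :=
    (hcont.continuousAt (x := zstar)).eventually_lt_const hlt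
  rcases Metric.eventually_nhds_iff.mp hev with ⟨δ, hδ, h⟩
  refine ⟨zstar + δ / 2, by linarith, le_of_lt (h ?_)⟩
  rw [Real.dist_eq, show zstar + δ / 2 - zstar = δ / 2 by ring,
    abs_of_pos (by linarith)]
  linarith
end

section
/- Let 0 ≤ u₁ ≤ u₂, 0 ≤ v₁ ≤ v₂, and set a = u₂·v₂ and a' = u₁·v₁. Let X, Y, D, T be real numbers. Then the semi-infinite robust constraint (for all u ∈ [u₁, u₂] and v ∈ [v₁, v₂], X + u·v·Y ≤ D + u·v·T) holds if and only if either (Y ≥ T and X + a·Y ≤ D + a·T) or (Y ≤ T and X + a'·Y ≤ D + a'·T). -/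
/-- For `0 ≤ u₁ ≤ u₂`, `0 ≤ v₁ ≤ v₂`, `a = u₂·v₂`, `a' = u₁·v₁` and
reals `X, Y, D, T`, the semi-infinite robust constraint
`∀ u ∈ [u₁, u₂], ∀ v ∈ [v₁, v₂], X + u·v·Y ≤ D + u·v·T` holds iff either
(`Y ≥ T` and `X + a·Y ≤ D + a·T`) or (`Y ≤ T` and `X + a'·Y ≤ D + a'·T`). -/
theorem robust_constraint_iff
    (u₁ u₂ v₁ v₂ : ℝ) (hu₁ : 0 ≤ u₁) (hu : u₁ ≤ u₂) (hv₁ : 0 ≤ v₁) (hv : v₁ ≤ v₂)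
    (a a' : ℝ) (ha : a = u₂ * v₂) (ha' : a' = u₁ * v₁)
    (X Y D T : ℝ) :
    (∀ u ∈ Set.Icc u₁ u₂, ∀ v ∈ Set.Icc v₁ v₂, X + u * v * Y ≤ D + u * v * T) ↔
    ((T ≤ Y ∧ X + a * Y ≤ D + a * T) ∨ (Y ≤ T ∧ X + a' * Y ≤ D + a' * T)) := by
  constructor
  · intro h
    rcases le_total T Y with hTY | hTY
    · exact Or.inl ⟨hTY, ha ▸ h u₂ ⟨hu, le_refl _⟩ v₂ ⟨hv, le_refl _⟩⟩
    · exact Or.inr ⟨hTY, ha' ▸ h u₁ ⟨le_refl _, hu⟩ v₁ ⟨le_refl _, hv⟩⟩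
  · rintro (⟨hTY, hc⟩ | ⟨hTY, hc⟩) <;> intro u ⟨hu1, hu2⟩ v ⟨hv1, hv2⟩
    · have hle : u * v ≤ a := ha ▸ mul_le_mul hu2 hv2 (hv₁.trans hv1) (hu₁.trans hu)
      have h1 : X - D ≤ a * (T - Y) := by linarith [hc]
      have h2 : a * (T - Y) ≤ u * v * (T - Y) :=
        mul_le_mul_of_nonpos_right hle (by linarith)
      linarith
    · have hge : a' ≤ u * v := ha' ▸ mul_le_mul hu1 hv1 hv₁ (hu₁.trans hu1)
      have h1 : X - D ≤ a' * (T - Y) := by linarith [hc]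
      have h2 : a' * (T - Y) ≤ u * v * (T - Y) :=
        mul_le_mul_of_nonneg_right hge (by linarith)
      linarith
end

section
/- Let c > 0 and B > 0. Suppose X₁, Y₁, X₂, Y₂ > 0 satisfy X₁ + c·Y₁ = B (the nominal solution lies on the constraint boundary), X₂ + c·Y₂ ≤ B (the robust/stochastic solution is feasible for the nominal problem), and X₂²/Y₂ > X₁²/Y₁ (the robust/stochastic solution uses more fractions). Then Y₂ < Y₁; i.e., if the robust or stochastic optimal schedule has more treatment sessions than the nominal schedule, then its total dose squared is strictly smaller. -/
/-- Let `c > 0`, `B > 0` and `X₁, Y₁, X₂, Y₂ > 0` with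
`X₁ + c·Y₁ = B` (nominal solution on the constraint boundary),
`X₂ + c·Y₂ ≤ B` (robust/stochastic solution feasible for the nominal problem), and
`X₂²/Y₂ > X₁²/Y₁` (the robust/stochastic solution uses more fractions).
Then `Y₂ < Y₁`: more treatment sessions forces a strictly smaller total dose squared. -/
theorem more_fractions_implies_smaller_dose_squared
    (c B : ℝ) (hc : 0 < c) (hB : 0 < B)
    (X₁ Y₁ X₂ Y₂ : ℝ) (hX₁ : 0 < X₁) (hY₁ : 0 < Y₁) (hX₂ : 0 < X₂) (hY₂ : 0 < Y₂)
    (h1 : X₁ + c * Y₁ = B) (h2 : X₂ + c * Y₂ ≤ B)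
    (h3 : X₁ ^ 2 / Y₁ < X₂ ^ 2 / Y₂) :
    Y₂ < Y₁ := by
  by_contra h
  push_neg at h
  have hx : X₂ ≤ X₁ := by nlinarith
  have hsq : X₂ ^ 2 ≤ X₁ ^ 2 := by nlinarith
  have := div_le_div₀ (by positivity) hsq hY₁ h
  linarith
end

section
/- Let c > 0 and B > 0. Suppose X₁, Y₁, X₂, Y₂ > 0 satisfy X₁ + c·Y₁ = B (the nominal solution lies on the constraint boundary), X₂ + c·Y₂ ≤ B (the robust/stochastic solution is feasible for the nominal problem), and X₂²/Y₂ < X₁²/Y₁ (the robust/stochastic solution uses fewer fractions). Then X₂ < X₁; i.e., if the robust or stochastic optimal schedule has fewer treatment sessions than the nominal schedule, then its total dose is strictly smaller. -/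
/-- Let `c > 0`, `B > 0` and `X₁, Y₁, X₂, Y₂ > 0` with
`X₁ + c·Y₁ = B` (nominal solution on the constraint boundary),
`X₂ + c·Y₂ ≤ B` (robust/stochastic solution feasible for the nominal problem), and
`X₂²/Y₂ < X₁²/Y₁` (the robust/stochastic solution uses fewer fractions).
Then `X₂ < X₁`: fewer treatment sessions forces a strictly smaller total dose. -/
theorem fewer_fractions_implies_smaller_dose
    (c B : ℝ) (hc : 0 < c) (hB : 0 < B)
    (X₁ Y₁ X₂ Y₂ : ℝ) (hX₁ : 0 < X₁) (hY₁ : 0 < Y₁) (hX₂ : 0 < X₂) (hY₂ : 0 < Y₂)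
    (h1 : X₁ + c * Y₁ = B) (h2 : X₂ + c * Y₂ ≤ B)
    (h3 : X₂ ^ 2 / Y₂ < X₁ ^ 2 / Y₁) :
    X₂ < X₁ := by
  by_contra h
  push_neg at h
  have hY : Y₂ ≤ Y₁ := by nlinarith
  have : X₁ ^ 2 / Y₁ ≤ X₂ ^ 2 / Y₂ := by
    apply div_le_div₀ (by positivity) (by nlinarith) hY₂ hY
  linarith
end

section
/- Let M ≥ 1, let c_i > 0 and B_i > 0 for i = 1, …, M, and let α, β > 0 satisfy β ≥ α·c_i for every i (equivalently, α/β ≤ min_i 1/c_i). Then for every pair (X, Y) with X, Y ≥ 0, Y ≤ X², and X + c_i·Y ≤ B_i for all i, there exists a pair (X', Y') with X', Y' ≥ 0, Y' = X'², X' + c_i·Y' ≤ B_i for all i, and α·X' + β·Y' ≥ α·X + β·Y. In other words, in the absence of tumor repopulation, a hypo-fractionated (single-dose) schedule is optimal. -/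
/-- Let `M ≥ 1`, `c_i > 0`, `B_i > 0` for `i = 1, …, M`, and
`α, β > 0` with `β ≥ α·c_i` for every `i` (i.e. `α/β ≤ min_i 1/c_i`). Then for
every `(X, Y)` with `X, Y ≥ 0`, `Y ≤ X²`, and `X + c_i·Y ≤ B_i` for all `i`,
there exists `(X', Y')` with `X', Y' ≥ 0`, `Y' = X'²`, `X' + c_i·Y' ≤ B_i` for
all `i`, and `α·X' + β·Y' ≥ α·X + β·Y`: in the absence of tumor repopulation a
hypo-fractionated (single-dose) schedule is optimal. -/
theorem hypo_fractionation_optimal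
    (M : ℕ) (hM : 1 ≤ M) (c B : Fin M → ℝ)
    (hc : ∀ i, 0 < c i) (hB : ∀ i, 0 < B i)
    (α β : ℝ) (hα : 0 < α) (hβ : 0 < β) (hαβ : ∀ i, α * c i ≤ β)
    (X Y : ℝ) (hX : 0 ≤ X) (hY : 0 ≤ Y) (hYX : Y ≤ X ^ 2)
    (hfeas : ∀ i, X + c i * Y ≤ B i) :
    ∃ X' Y' : ℝ, 0 ≤ X' ∧ 0 ≤ Y' ∧ Y' = X' ^ 2 ∧
      (∀ i, X' + c i * Y' ≤ B i) ∧
      α * X + β * Y ≤ α * X' + β * Y' := by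
  haveI : Nonempty (Fin M) := ⟨⟨0, hM⟩⟩
  have hne : (Finset.univ : Finset (Fin M)).Nonempty := Finset.univ_nonempty
  set cm := Finset.univ.sup' hne c with hcm
  have hcm_le : ∀ i, c i ≤ cm := fun i => Finset.le_sup' c (Finset.mem_univ i)
  have hcm_pos : 0 < cm := lt_of_lt_of_le (hc (Classical.arbitrary _))
    (hcm_le _)
  have hβcm : α * cm ≤ β := by
    obtain ⟨j, _, hj⟩ := Finset.exists_mem_eq_sup' hne c
    rw [hcm, hj]; exact hαβ j
  set f : ℝ → ℝ := fun t => (X - cm * t) ^ 2 - (Y + t) with hf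
  have hcont : ContinuousOn f (Set.Icc 0 (X / cm)) := by fun_prop
  have h0 : 0 ≤ f 0 := by simp [hf]; linarith
  have h1 : f (X / cm) ≤ 0 := by
    have hx : X - cm * (X / cm) = 0 := by field_simp; ring
    have : 0 ≤ X / cm := div_nonneg hX hcm_pos.le
    simp [hf, hx]; nlinarith
  obtain ⟨t, ht, hft⟩ := intermediate_value_Icc' (div_nonneg hX hcm_pos.le)
    hcont ⟨h1, h0⟩
  obtain ⟨ht0, ht1⟩ := ht
  have hXt : 0 ≤ X - cm * t := by
    have := (le_div_iff₀ hcm_pos).mp ht1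
    linarith
  have heq : (X - cm * t) ^ 2 - (Y + t) = 0 := hft
  refine ⟨X - cm * t, Y + t, hXt, by linarith, by linarith, fun i => ?_, ?_⟩
  · have h := hfeas i
    have := hcm_le i
    nlinarith
  · nlinarith
end

section
/- Let M ≥ 1 and N ≥ 1 be given, let c_i > 0 and B_i > 0 for i = 1, …, M, and let α, β > 0 satisfy α·c_i ≥ β for every i (equivalently, α/β ≥ max_i 1/c_i). Then for every pair (X, Y) with X, Y ≥ 0, Y ≤ X² ≤ N·Y, and X + c_i·Y ≤ B_i for all i, there exists a pair (X', Y') with X', Y' ≥ 0, X'² = N·Y', X' + c_i·Y' ≤ B_i for all i, and α·X' + β·Y' ≥ α·X + β·Y. In other words, in the absence of tumor repopulation, a hyper-fractionated schedule with the maximum number N of equal fractions is optimal. -/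
/-- Let `M ≥ 1`, `N ≥ 1`, `c_i > 0`, `B_i > 0` for `i = 1, …, M`,
and `α, β > 0` with `α·c_i ≥ β` for every `i` (i.e. `α/β ≥ max_i 1/c_i`). Then
for every `(X, Y)` with `X, Y ≥ 0`, `Y ≤ X² ≤ N·Y`, and `X + c_i·Y ≤ B_i` for
all `i`, there exists `(X', Y')` with `X', Y' ≥ 0`, `X'² = N·Y'`,
`X' + c_i·Y' ≤ B_i` for all `i`, and `α·X' + β·Y' ≥ α·X + β·Y`: in the absence
of tumor repopulation a hyper-fractionated schedule with the maximum number `N`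
of equal fractions is optimal. -/
theorem hyper_fractionation_optimal
    (M N : ℕ) (hM : 1 ≤ M) (hN : 1 ≤ N) (c B : Fin M → ℝ)
    (hc : ∀ i, 0 < c i) (hB : ∀ i, 0 < B i)
    (α β : ℝ) (hα : 0 < α) (hβ : 0 < β) (hαβ : ∀ i, β ≤ α * c i)
    (X Y : ℝ) (hX : 0 ≤ X) (hY : 0 ≤ Y) (hYX : Y ≤ X ^ 2) (hXN : X ^ 2 ≤ (N : ℝ) * Y)
    (hfeas : ∀ i, X + c i * Y ≤ B i) :
    ∃ X' Y' : ℝ, 0 ≤ X' ∧ 0 ≤ Y' ∧ X' ^ 2 = (N : ℝ) * Y' ∧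
      (∀ i, X' + c i * Y' ≤ B i) ∧
      α * X + β * Y ≤ α * X' + β * Y' := by
  haveI : Nonempty (Fin M) := ⟨⟨0, hM⟩⟩
  -- minimal coefficient
  obtain ⟨i₀, -, hi₀⟩ := Finset.exists_min_image Finset.univ c ⟨⟨0, hM⟩, Finset.mem_univ _⟩
  set m := c i₀ with hm
  have hmpos : 0 < m := hc i₀
  have hmle : ∀ i, m ≤ c i := fun i => hi₀ i (Finset.mem_univ i)
  have hmβ : β ≤ α * m := hαβ i₀
  -- IVT on g s = (X + m s)^2 - N (Y - s)
  set g : ℝ → ℝ := fun s => (X + m * s) ^ 2 - (N : ℝ) * (Y - s) with hg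
  have hcont : ContinuousOn g (Set.Icc 0 Y) := by
    apply Continuous.continuousOn; fun_prop
  have h0 : g 0 ≤ 0 := by simp [hg]; linarith
  have hYend : 0 ≤ g Y := by
    have : (0:ℝ) ≤ (X + m * Y) ^ 2 := sq_nonneg _
    simp [hg]; linarith
  obtain ⟨s, hs, hgs⟩ := intermediate_value_Icc hY hcont (Set.mem_Icc.mpr ⟨h0, hYend⟩)
  obtain ⟨hs0, hsY⟩ := Set.mem_Icc.mp hs
  refine ⟨X + m * s, Y - s, ?_, by linarith, by simp [hg] at hgs; linarith, ?_, ?_⟩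
  · have : 0 ≤ m * s := mul_nonneg hmpos.le hs0
    linarith
  · intro i
    have h1 := hfeas i
    have h2 : 0 ≤ (c i - m) * s := mul_nonneg (by linarith [hmle i]) hs0
    have : c i * (Y - s) = c i * Y - c i * s := by ring
    nlinarith
  · have h2 : 0 ≤ (α * m - β) * s := mul_nonneg (by linarith) hs0
    nlinarith
end
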